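/- arXiv:1805.10921 — 6 statements merged into one kernel-verified Lean document; each statement's English description precedes it below -/
import Mathlib

section
/- (Local comparison lemma.) Fix continuous initial profiles $\nu_1, \nu_2$ and a common environment of continuous paths $B^{(1)}, \dots, B^{(n)}$. Define $L_{\nu_i}(x,n) = \max_{z \le x} \{ \nu_i(z) + L((z,1),(x,n)) \}$ and let $Z_{\nu_i}(x,n)$ be the rightmost maximizer. If $x < y$ and $Z_{\nu_1}(y,n) \le Z_{\nu_2}(x,n)$, then $L_{\nu_1}(y,n) - L_{\nu_1}(x,n) \le L_{\nu_2}(y,n) - L_{\nu_2}(x,n)$. -/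
/-- The set of passage times of staircase paths from `(x, k)` to `(y, l)` in the
Brownian last-passage percolation model with environment `B`. -/
def lppSet (B : ℕ → ℝ → ℝ) (k l : ℕ) (x y : ℝ) : Set ℝ :=
  {v | ∃ z : ℕ → ℝ, z (k - 1) = x ∧ z l = y ∧
    (∀ i : ℕ, k ≤ i → i ≤ l → z (i - 1) ≤ z i) ∧
    v = ∑ i ∈ Finset.Icc k l, (B i (z i) - B i (z (i - 1)))}

/-!
Take the exit points `z₁ = Z₁ y n ≤ z₂ = Z₂ x n`. A geodesic from `(z₁, 1)` to `(y, n)` and one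
from `(z₂, 1)` to `(x, n)` must cross, and their pointwise minimum and maximum are paths from
`(z₁, 1)` to `(x, n)` and from `(z₂, 1)` to `(y, n)` with the same total weight. This gives the
quadrangle inequality `L(z₁, y) + L(z₂, x) ≤ L(z₁, x) + L(z₂, y)`, and the theorem follows from it
because `z₁` is optimal for `L₁ y n` and `z₂` is optimal for `L₂ x n`.
-/

lemma apply_min_add_apply_max {α β : Type*} [LinearOrder α] [AddCommMagma β] (f : α → β)
    (a b : α) : f (min a b) + f (max a b) = f a + f b := by
  rcases le_total a b with h | h
  · rw [min_eq_left h, max_eq_right h]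
  · rw [min_eq_right h, max_eq_left h, add_comm]

lemma exists_lppSet_add_eq_of_crossing {B : ℕ → ℝ → ℝ} {k l : ℕ} {z₁ z₂ x y p q : ℝ}
    (h12 : z₁ ≤ z₂) (hxy : x ≤ y) (hp : p ∈ lppSet B k l z₁ y) (hq : q ∈ lppSet B k l z₂ x) :
    ∃ p' ∈ lppSet B k l z₁ x, ∃ q' ∈ lppSet B k l z₂ y, p' + q' = p + q := by
  obtain ⟨z, hz₀, hzl, hz_mono, rfl⟩ := hp
  obtain ⟨w, hw₀, hwl, hw_mono, rfl⟩ := hq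
  refine ⟨_, ⟨fun i => min (z i) (w i), ?_, ?_, ?_, rfl⟩,
    _, ⟨fun i => max (z i) (w i), ?_, ?_, ?_, rfl⟩, ?_⟩
  · simp only [hz₀, hw₀, min_eq_left h12]
  · simp only [hzl, hwl, min_eq_right hxy]
  · exact fun i hki hil => min_le_min (hz_mono i hki hil) (hw_mono i hki hil)
  · simp only [hz₀, hw₀, max_eq_right h12]
  · simp only [hzl, hwl, max_eq_left hxy]
  · exact fun i hki hil => max_le_max (hz_mono i hki hil) (hw_mono i hki hil)
  · simp only [← Finset.sum_add_distrib]
    refine Finset.sum_congr rfl fun i _ => ?_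
    linear_combination apply_min_add_apply_max (B i) (z i) (w i)
      - apply_min_add_apply_max (B i) (z (i - 1)) (w (i - 1))

lemma lpp_quadrangle {B : ℕ → ℝ → ℝ} {k l : ℕ} {L : ℝ → ℝ → ℝ}
    (hL : ∀ a b, a ≤ b → IsGreatest (lppSet B k l a b) (L a b)) {z₁ z₂ x y : ℝ}
    (h12 : z₁ ≤ z₂) (h2x : z₂ ≤ x) (hxy : x ≤ y) :
    L z₁ y + L z₂ x ≤ L z₁ x + L z₂ y := by
  obtain ⟨p, hp, q, hq, hpq⟩ := exists_lppSet_add_eq_of_crossing h12 hxy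
    (hL z₁ y (h12.trans (h2x.trans hxy))).1 (hL z₂ x h2x).1
  have hp_le : p ≤ L z₁ x := (hL z₁ x (h12.trans h2x)).2 hp
  have hq_le : q ≤ L z₂ y := (hL z₂ y (h2x.trans hxy)).2 hq
  linarith

theorem lpp_local_comparison_general (B : ℕ → ℝ → ℝ)
    (ν₁ ν₂ : ℝ → ℝ)
    (Lenv : ℕ → ℕ → ℝ → ℝ → ℝ)
    (hEnv : ∀ (k l : ℕ) (z x : ℝ), 1 ≤ k → k ≤ l → z ≤ x →
      IsGreatest (lppSet B k l z x) (Lenv k l z x))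
    (L₁ L₂ Z₁ Z₂ : ℝ → ℕ → ℝ)
    (hL₁ : ∀ (x : ℝ) (n : ℕ), 1 ≤ n →
      IsGreatest {v | ∃ z ≤ x, v = ν₁ z + Lenv 1 n z x} (L₁ x n))
    (hL₂ : ∀ (x : ℝ) (n : ℕ), 1 ≤ n →
      IsGreatest {v | ∃ z ≤ x, v = ν₂ z + Lenv 1 n z x} (L₂ x n))
    (hZ₁ : ∀ (x : ℝ) (n : ℕ), 1 ≤ n →
      IsGreatest {z | z ≤ x ∧ L₁ x n = ν₁ z + Lenv 1 n z x} (Z₁ x n))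
    (hZ₂ : ∀ (x : ℝ) (n : ℕ), 1 ≤ n →
      IsGreatest {z | z ≤ x ∧ L₂ x n = ν₂ z + Lenv 1 n z x} (Z₂ x n))
    (n : ℕ) (hn : 1 ≤ n) (x y : ℝ) (hxy : x < y)
    (hZ : Z₁ y n ≤ Z₂ x n) :
    L₁ y n - L₁ x n ≤ L₂ y n - L₂ x n := by
  obtain ⟨⟨-, hL₁y⟩, -⟩ := hZ₁ y n hn
  obtain ⟨⟨hZ₂x, hL₂x⟩, -⟩ := hZ₂ x n hn
  have hL₁x : ν₁ (Z₁ y n) + Lenv 1 n (Z₁ y n) x ≤ L₁ x n :=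
    (hL₁ x n hn).2 ⟨Z₁ y n, hZ.trans hZ₂x, rfl⟩
  have hL₂y : ν₂ (Z₂ x n) + Lenv 1 n (Z₂ x n) y ≤ L₂ y n :=
    (hL₂ y n hn).2 ⟨Z₂ x n, hZ₂x.trans hxy.le, rfl⟩
  have hquad := lpp_quadrangle (fun a b hab => hEnv 1 n a b le_rfl hn hab) hZ hZ₂x hxy.le
  linarith

/-- Local comparison lemma: with profiles `ν₁, ν₂` coupled through the same
environment, `L_{νᵢ}(x,n) = max_{z ≤ x} { νᵢ z + L((z,1),(x,n)) }` and rightmost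
maximizers (exit points) `Zᵢ`, if `x < y` and `Z₁ y n ≤ Z₂ x n`, then
`L₁ y n - L₁ x n ≤ L₂ y n - L₂ x n`. -/
theorem lpp_local_comparison (B : ℕ → ℝ → ℝ) (hB : ∀ i, Continuous (B i))
    (ν₁ ν₂ : ℝ → ℝ) (hν₁ : Continuous ν₁) (hν₂ : Continuous ν₂)
    (Lenv : ℕ → ℕ → ℝ → ℝ → ℝ)
    (hEnv : ∀ (k l : ℕ) (z x : ℝ), 1 ≤ k → k ≤ l → z ≤ x →
      IsGreatest (lppSet B k l z x) (Lenv k l z x))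
    (L₁ L₂ Z₁ Z₂ : ℝ → ℕ → ℝ)
    (hL₁ : ∀ (x : ℝ) (n : ℕ), 1 ≤ n →
      IsGreatest {v | ∃ z ≤ x, v = ν₁ z + Lenv 1 n z x} (L₁ x n))
    (hL₂ : ∀ (x : ℝ) (n : ℕ), 1 ≤ n →
      IsGreatest {v | ∃ z ≤ x, v = ν₂ z + Lenv 1 n z x} (L₂ x n))
    (hZ₁ : ∀ (x : ℝ) (n : ℕ), 1 ≤ n →
      IsGreatest {z | z ≤ x ∧ L₁ x n = ν₁ z + Lenv 1 n z x} (Z₁ x n))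
    (hZ₂ : ∀ (x : ℝ) (n : ℕ), 1 ≤ n →
      IsGreatest {z | z ≤ x ∧ L₂ x n = ν₂ z + Lenv 1 n z x} (Z₂ x n))
    (n : ℕ) (hn : 1 ≤ n) (x y : ℝ) (hxy : x < y)
    (hZ : Z₁ y n ≤ Z₂ x n) :
    L₁ y n - L₁ x n ≤ L₂ y n - L₂ x n :=
  lpp_local_comparison_general B ν₁ ν₂ Lenv hEnv L₁ L₂ Z₁ Z₂ hL₁ hL₂ hZ₁ hZ₂ n hn x y hxy hZ
end

section
/- (Monotonicity/attractiveness of the LPP evolution.) Let $\nu_1, \nu_2$ be continuous profiles such that $\nu_1(y) - \nu_1(x) \le \nu_2(y) - \nu_2(x)$ for all $x < y$. Construct $L_{\nu_1}$ and $L_{\nu_2}$ with the same environment: $L_{\nu_i}(x,n) = \max_{z \le x} \{ \nu_i(z) + L((z,1),(x,n)) \}$ (maxima assumed attained). Then $L_{\nu_1}(y,n) - L_{\nu_1}(x,n) \le L_{\nu_2}(y,n) - L_{\nu_2}(x,n)$ for all $x < y$ and all $n \ge 1$. -/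
theorem Nat.exists_between_and_not_succ {P : ℕ → Prop} {a b : ℕ} (hab : a ≤ b)
    (ha : P a) (hb : ¬P b) : ∃ i, a ≤ i ∧ i < b ∧ P i ∧ ¬P (i + 1) := by
  induction b, hab using Nat.le_induction with
  | base => exact absurd ha hb
  | succ n han ih =>
    by_cases hn : P n
    · exact ⟨n, han, n.lt_succ_self, hn, hb⟩
    · obtain ⟨i, hai, hin, hPi, hPi'⟩ := ih hn
      exact ⟨i, hai, hin.trans n.lt_succ_self, hPi, hPi'⟩

namespace LPP

variable (B : ℕ → ℝ → ℝ) (k l : ℕ)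

def passageTime (z : ℕ → ℝ) : ℝ :=
  ∑ i ∈ Finset.Icc k l, (B i (z i) - B i (z (i - 1)))

/-- `z i` is where the path leaves level `i`, so `z (k - 1)` is its starting point. -/
def IsStaircase (z : ℕ → ℝ) : Prop :=
  ∀ i, k ≤ i → i ≤ l → z (i - 1) ≤ z i

def splice (i : ℕ) (ζ w : ℕ → ℝ) : ℕ → ℝ :=
  fun j => if j ≤ i then ζ j else w j

variable {B k l}

theorem splice_apply_of_le {i j : ℕ} (h : j ≤ i) (ζ w : ℕ → ℝ) : splice i ζ w j = ζ j :=
  if_pos h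

theorem splice_apply_of_lt {i j : ℕ} (h : i < j) (ζ w : ℕ → ℝ) : splice i ζ w j = w j :=
  if_neg h.not_ge

theorem passageTime_mem_lppSet {z : ℕ → ℝ} {x y : ℝ} (hx : z (k - 1) = x) (hy : z l = y)
    (hz : IsStaircase k l z) : passageTime B k l z ∈ lppSet B k l x y :=
  ⟨z, hx, hy, hz, rfl⟩

theorem exists_of_mem_lppSet {v x y : ℝ} (hv : v ∈ lppSet B k l x y) :
    ∃ z, z (k - 1) = x ∧ z l = y ∧ IsStaircase k l z ∧ v = passageTime B k l z :=
  hv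

theorem passageTime_splice_add_splice (i : ℕ) (ζ w : ℕ → ℝ) :
    passageTime B k l (splice i ζ w) + passageTime B k l (splice i w ζ) =
      passageTime B k l ζ + passageTime B k l w := by
  simp only [passageTime, ← Finset.sum_add_distrib]
  refine Finset.sum_congr rfl fun j _ => ?_
  by_cases hj : j ≤ i
  · simp only [splice, if_pos hj, if_pos (j.sub_le 1 |>.trans hj)]
  · simp only [splice, if_neg hj]
    split_ifs <;> ring

theorem isStaircase_splice {i : ℕ} {ζ w : ℕ → ℝ} (hζ : IsStaircase k l ζ)
    (hw : IsStaircase k l w) (hi : ζ i ≤ w (i + 1)) : IsStaircase k l (splice i ζ w) := by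
  intro j hkj hjl
  by_cases hj : j ≤ i
  · simpa only [splice, if_pos hj, if_pos (j.sub_le 1 |>.trans hj)] using hζ j hkj hjl
  · by_cases hj' : j - 1 ≤ i
    · obtain rfl : j = i + 1 := by omega
      simpa only [splice, if_neg hj, Nat.add_sub_cancel, le_refl, if_true] using hi
    · simpa only [splice, if_neg hj, if_neg hj'] using hw j hkj hjl

theorem quadrangle_inequality {L : ℝ → ℝ → ℝ}
    (hL : ∀ z x, z ≤ x → IsGreatest (lppSet B k l z x) (L z x)) (hkl : k ≤ l)
    {z₁ z₂ x y : ℝ} (h₁₂ : z₁ ≤ z₂) (h₂x : z₂ ≤ x) (hxy : x < y) :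
    L z₁ y + L z₂ x ≤ L z₁ x + L z₂ y := by
  obtain ⟨ζ, hζ₀, hζl, hζ, hζL⟩ := exists_of_mem_lppSet (hL z₁ y (by linarith)).1
  obtain ⟨w, hw₀, hwl, hw, hwL⟩ := exists_of_mem_lppSet (hL z₂ x h₂x).1
  -- the crossing level: `ζ` is weakly left of `w` at level `i`, strictly right at `i + 1`
  obtain ⟨i, hki, hil, hζwi, hwζi⟩ := Nat.exists_between_and_not_succ (P := fun j => ζ j ≤ w j)
    (by omega : k - 1 ≤ l) (by rwa [hζ₀, hw₀]) (by simp [hζl, hwl, hxy])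
  have hwi : w i ≤ w (i + 1) := by simpa using hw (i + 1) (by omega) (by omega)
  have h₁x : passageTime B k l (splice i ζ w) ≤ L z₁ x := by
    refine (hL z₁ x (by linarith)).2 (passageTime_mem_lppSet ?_ ?_ ?_)
    · rw [splice_apply_of_le hki, hζ₀]
    · rw [splice_apply_of_lt hil, hwl]
    · exact isStaircase_splice hζ hw (hζwi.trans hwi)
  have h₂y : passageTime B k l (splice i w ζ) ≤ L z₂ y := by
    refine (hL z₂ y (by linarith)).2 (passageTime_mem_lppSet ?_ ?_ ?_)
    · rw [splice_apply_of_le hki, hw₀]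
    · rw [splice_apply_of_lt hil, hζl]
    · exact isStaircase_splice hw hζ (hwi.trans (not_le.1 hwζi).le)
  have hswap := passageTime_splice_add_splice (B := B) (k := k) (l := l) i ζ w
  rw [hζL, hwL]
  linarith

end LPP

theorem lpp_attractiveness_general (B : ℕ → ℝ → ℝ)
    (ν₁ ν₂ : ℝ → ℝ)
    (hinc : ∀ x y : ℝ, x < y → ν₁ y - ν₁ x ≤ ν₂ y - ν₂ x)
    (Lenv : ℕ → ℕ → ℝ → ℝ → ℝ)
    (hEnv : ∀ (k l : ℕ) (z x : ℝ), 1 ≤ k → k ≤ l → z ≤ x →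
      IsGreatest (lppSet B k l z x) (Lenv k l z x))
    (L₁ L₂ : ℝ → ℕ → ℝ)
    (hL₁ : ∀ (x : ℝ) (n : ℕ), 1 ≤ n →
      IsGreatest {v | ∃ z ≤ x, v = ν₁ z + Lenv 1 n z x} (L₁ x n))
    (hL₂ : ∀ (x : ℝ) (n : ℕ), 1 ≤ n →
      IsGreatest {v | ∃ z ≤ x, v = ν₂ z + Lenv 1 n z x} (L₂ x n)) :
    ∀ (n : ℕ), 1 ≤ n → ∀ x y : ℝ, x < y →
      L₁ y n - L₁ x n ≤ L₂ y n - L₂ x n := by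
  intro n hn x y hxy
  obtain ⟨⟨z₁, hz₁y, hL₁y⟩, -⟩ := hL₁ y n hn
  obtain ⟨⟨z₂, hz₂x, hL₂x⟩, -⟩ := hL₂ x n hn
  rcases le_or_gt z₁ z₂ with h₁₂ | h₂₁
  · have := LPP.quadrangle_inequality (fun z x => hEnv 1 n z x le_rfl hn) hn h₁₂ hz₂x hxy
    have := (hL₁ x n hn).2 ⟨z₁, h₁₂.trans hz₂x, rfl⟩
    have := (hL₂ y n hn).2 ⟨z₂, hz₂x.trans hxy.le, rfl⟩
    linarith
  · have := hinc z₂ z₁ h₂₁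
    have := (hL₁ x n hn).2 ⟨z₂, hz₂x, rfl⟩
    have := (hL₂ y n hn).2 ⟨z₁, hz₁y, rfl⟩
    linarith

/-- Monotonicity/attractiveness of the LPP evolution: if the increments of `ν₁`
are dominated by those of `ν₂`, and both profiles evolve in the same environment
via `L_{νᵢ}(x,n) = max_{z ≤ x} { νᵢ z + L((z,1),(x,n)) }`, then the increments of
the evolved profiles remain ordered: `L₁ y n - L₁ x n ≤ L₂ y n - L₂ x n` for all
`x < y` and `n ≥ 1`. -/
theorem lpp_attractiveness (B : ℕ → ℝ → ℝ) (hB : ∀ i, Continuous (B i))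
    (ν₁ ν₂ : ℝ → ℝ) (hν₁ : Continuous ν₁) (hν₂ : Continuous ν₂)
    (hinc : ∀ x y : ℝ, x < y → ν₁ y - ν₁ x ≤ ν₂ y - ν₂ x)
    (Lenv : ℕ → ℕ → ℝ → ℝ → ℝ)
    (hEnv : ∀ (k l : ℕ) (z x : ℝ), 1 ≤ k → k ≤ l → z ≤ x →
      IsGreatest (lppSet B k l z x) (Lenv k l z x))
    (L₁ L₂ : ℝ → ℕ → ℝ)
    (hL₁ : ∀ (x : ℝ) (n : ℕ), 1 ≤ n →
      IsGreatest {v | ∃ z ≤ x, v = ν₁ z + Lenv 1 n z x} (L₁ x n))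
    (hL₂ : ∀ (x : ℝ) (n : ℕ), 1 ≤ n →
      IsGreatest {v | ∃ z ≤ x, v = ν₂ z + Lenv 1 n z x} (L₂ x n)) :
    ∀ (n : ℕ), 1 ≤ n → ∀ x y : ℝ, x < y →
      L₁ y n - L₁ x n ≤ L₂ y n - L₂ x n :=
  lpp_attractiveness_general B ν₁ ν₂ hinc Lenv hEnv L₁ L₂ hL₁ hL₂
end

section
/- (Queue lengths as vertical increments of LPP.) Let $\nu(x)$ be continuous with $\nu(0)=0$, set $a(x) = \mu x - \nu(x)$ and $s^{(n)}(x) = \mu x - B^{(n)}(x)$, and define the tandem queue quantities $q^{(n)}, d^{(n)}$ recursively by $q^{(n)}(x) = \sup_{z \le x} \{ d^{(n-1)}(z,x) - s^{(n)}(z,x) \}$ and $d^{(n)}(x,y) = d^{(n-1)}(x,y) - (q^{(n)}(y) - q^{(n)}(x))$ with $d^{(0)} := a$. Then for every $n \ge 1$: $q^{(n)}(x) = L_\nu(x,n) - L_\nu(x,n-1)$ and $d^{(n)}(x) = \mu x - (L_\nu(x,n) - L_\nu(0,n))$, where $L_\nu(x,n) = \sup_{z \le x}\{ \nu(z) + L((z,1),(x,n))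 \}$ and $L_\nu(x,0) := \nu(x)$. -/
section LastPassage

variable {B : ℕ → ℝ → ℝ} {k m : ℕ} {v w x y : ℝ}

theorem lppSet_self (hk : 1 ≤ k) (hxy : x ≤ y) : lppSet B k k x y = {B k y - B k x} := by
  ext v
  constructor
  · rintro ⟨p, hx, hy, -, rfl⟩
    simp [hx, hy]
  · rintro rfl
    have hk' : k - 1 ≠ k := by omega
    refine ⟨Function.update (fun _ => x) k y, by simp [hk'], by simp, ?_, by simp [hk']⟩
    intro i hki hik
    obtain rfl : i = k := le_antisymm hik hki
    simpa [hk'] using hxy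

theorem le_of_mem_lppSet (hv : v ∈ lppSet B k m x y) (hkm : k ≤ m + 1) : x ≤ y := by
  obtain ⟨p, rfl, rfl, hmono, -⟩ := hv
  suffices ∀ i, k - 1 ≤ i → i ≤ m → p (k - 1) ≤ p i from this m (by omega) le_rfl
  intro i hi
  induction i, hi using Nat.le_induction with
  | base => exact fun _ => le_rfl
  | succ i hki ih =>
    intro him
    exact (ih (by omega)).trans (by simpa using hmono (i + 1) (by omega) him)

theorem add_mem_lppSet_succ (hv : v ∈ lppSet B k m w y) (hkm : k ≤ m + 1) (hyx : y ≤ x) :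
    v + (B (m + 1) x - B (m + 1) y) ∈ lppSet B k (m + 1) w x := by
  obtain ⟨p, hw, hy, hmono, rfl⟩ := hv
  refine ⟨Function.update p (m + 1) x, ?_, by simp, ?_, ?_⟩
  · rwa [Function.update_of_ne (by omega)]
  · intro i hki him
    rcases Nat.lt_or_eq_of_le him with him | rfl
    · rw [Function.update_of_ne (by omega), Function.update_of_ne (by omega)]
      exact hmono i hki (by omega)
    · simpa [hy] using hyx
  · rw [Finset.sum_Icc_succ_top hkm]
    simp only [Function.update_self, add_tsub_cancel_right,
      Function.update_of_ne (show m ≠ m + 1 by omega), hy]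
    congr 1
    refine Finset.sum_congr rfl fun i hi => ?_
    have := (Finset.mem_Icc.1 hi).2
    rw [Function.update_of_ne (by omega), Function.update_of_ne (by omega)]

theorem exists_of_mem_lppSet_succ (hv : v ∈ lppSet B k (m + 1) w x) (hkm : k ≤ m + 1) :
    ∃ y ≤ x, ∃ u ∈ lppSet B k m w y, v = u + (B (m + 1) x - B (m + 1) y) := by
  obtain ⟨p, hw, hx, hmono, rfl⟩ := hv
  refine ⟨p m, by simpa [hx] using hmono (m + 1) hkm le_rfl, _,
    ⟨p, hw, rfl, fun i hki him => hmono i hki (by omega), rfl⟩, ?_⟩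
  rw [Finset.sum_Icc_succ_top hkm, add_tsub_cancel_right, hx]

variable {Lenv : ℕ → ℕ → ℝ → ℝ → ℝ}

theorem isGreatest_lenv_succ
    (hEnv : ∀ (k l : ℕ) (z x : ℝ), 1 ≤ k → k ≤ l → z ≤ x →
      IsGreatest (lppSet B k l z x) (Lenv k l z x))
    (hk : 1 ≤ k) (hkm : k ≤ m) (hwx : w ≤ x) :
    IsGreatest {v | ∃ y, w ≤ y ∧ y ≤ x ∧ v = Lenv k m w y + (B (m + 1) x - B (m + 1) y)}
      (Lenv k (m + 1) w x) := by
  have hupper : ∀ y, w ≤ y → y ≤ x →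
      Lenv k m w y + (B (m + 1) x - B (m + 1) y) ≤ Lenv k (m + 1) w x := fun y hwy hyx =>
    (hEnv k (m + 1) w x hk (by omega) hwx).2
      (add_mem_lppSet_succ (hEnv k m w y hk hkm hwy).1 (by omega) hyx)
  refine ⟨?_, fun v ⟨y, hwy, hyx, hv⟩ => hv ▸ hupper y hwy hyx⟩
  obtain ⟨y, hyx, u, hu, hLu⟩ :=
    exists_of_mem_lppSet_succ (hEnv k (m + 1) w x hk (by omega) hwx).1 (by omega)
  have hwy : w ≤ y := le_of_mem_lppSet hu (by omega)
  have hule := (hEnv k m w y hk hkm hwy).2 hu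
  exact ⟨y, hwy, hyx, le_antisymm (by linarith) (hupper y hwy hyx)⟩

theorem isGreatest_lν_succ {ν : ℝ → ℝ} {Lν : ℝ → ℕ → ℝ}
    (hEnv : ∀ (k l : ℕ) (z x : ℝ), 1 ≤ k → k ≤ l → z ≤ x →
      IsGreatest (lppSet B k l z x) (Lenv k l z x))
    (hLν0 : ∀ x : ℝ, Lν x 0 = ν x)
    (hLν : ∀ (x : ℝ) (n : ℕ), 1 ≤ n →
      IsGreatest {v | ∃ z ≤ x, v = ν z + Lenv 1 n z x} (Lν x n))
    (n : ℕ) (x : ℝ) :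
    IsGreatest {v | ∃ z ≤ x, v = Lν z n + (B (n + 1) x - B (n + 1) z)} (Lν x (n + 1)) := by
  cases n with
  | zero =>
    have hrow : ∀ z ≤ x, Lenv 1 1 z x = B 1 x - B 1 z := fun z hzx => by
      simpa [lppSet_self le_rfl hzx] using (hEnv 1 1 z x le_rfl le_rfl hzx).1
    convert hLν x 1 le_rfl using 2
    ext v
    refine exists_congr fun z => and_congr_right fun hzx => ?_
    rw [hLν0, hrow z hzx]
  | succ n =>
    have hupper : ∀ z ≤ x,
        Lν z (n + 1) + (B (n + 2) x - B (n + 2) z) ≤ Lν x (n + 2) := fun z hzx => by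
      obtain ⟨w, hwz, hw⟩ := (hLν z (n + 1) (by omega)).1
      have := (isGreatest_lenv_succ (m := n + 1) hEnv le_rfl (by omega) (hwz.trans hzx)).2
        ⟨z, hwz, hzx, rfl⟩
      have := (hLν x (n + 2) (by omega)).2 ⟨w, hwz.trans hzx, rfl⟩
      linarith
    refine ⟨?_, fun v ⟨z, hzx, hv⟩ => hv ▸ hupper z hzx⟩
    obtain ⟨w, hwx, hw⟩ := (hLν x (n + 2) (by omega)).1
    obtain ⟨z, hwz, hzx, hz⟩ := (isGreatest_lenv_succ (m := n + 1) hEnv le_rfl (by omega) hwx).1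
    have := (hLν z (n + 1) (by omega)).2 ⟨w, hwz, rfl⟩
    exact ⟨z, hzx, le_antisymm (by linarith) (hupper z hzx)⟩

end LastPassage

theorem departures_eq_sub {μ : ℝ} {ν : ℝ → ℝ} {q : ℕ → ℝ → ℝ} {d : ℕ → ℝ → ℝ → ℝ}
    (hd0 : ∀ x y : ℝ, d 0 x y = (μ * y - ν y) - (μ * x - ν x))
    (hd : ∀ (n : ℕ) (x y : ℝ), d (n + 1) x y = d n x y - (q (n + 1) y - q (n + 1) x))
    (n : ℕ) (x y : ℝ) : d n x y = d n 0 y - d n 0 x := by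
  induction n with
  | zero => rw [hd0, hd0, hd0]; ring
  | succ n ih => rw [hd, hd, hd, ih]; ring

theorem queue_eq_of_departures_eq {μ x Q Λ' : ℝ} {b Λ δ : ℝ → ℝ}
    (hQ : IsGreatest {v | ∃ z ≤ x, v = δ z - ((μ * x - b x) - (μ * z - b z))} Q)
    (hΛ : IsGreatest {v | ∃ z ≤ x, v = Λ z + (b x - b z)} Λ')
    (hδ : ∀ z, δ z = μ * (x - z) - (Λ x - Λ z)) :
    Q = Λ' - Λ x := by
  refine hQ.unique ⟨?_, ?_⟩
  · obtain ⟨z, hzx, hz⟩ := hΛ.1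
    exact ⟨z, hzx, by rw [hδ, hz]; ring⟩
  · rintro v ⟨z, hzx, rfl⟩
    have := hΛ.2 ⟨z, hzx, rfl⟩
    rw [hδ]
    linarith

theorem tandemQueue_eq_lpp_increments_general (μ : ℝ) (ν : ℝ → ℝ) (B : ℕ → ℝ → ℝ)
    (Lenv : ℕ → ℕ → ℝ → ℝ → ℝ)
    (hEnv : ∀ (k l : ℕ) (z x : ℝ), 1 ≤ k → k ≤ l → z ≤ x →
      IsGreatest (lppSet B k l z x) (Lenv k l z x))
    (Lν : ℝ → ℕ → ℝ) (hLν0 : ∀ x : ℝ, Lν x 0 = ν x)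
    (hLν : ∀ (x : ℝ) (n : ℕ), 1 ≤ n →
      IsGreatest {v | ∃ z ≤ x, v = ν z + Lenv 1 n z x} (Lν x n))
    (q : ℕ → ℝ → ℝ) (d : ℕ → ℝ → ℝ → ℝ)
    (hd0 : ∀ x y : ℝ, d 0 x y = (μ * y - ν y) - (μ * x - ν x))
    (hq : ∀ (n : ℕ) (x : ℝ),
      IsGreatest {v | ∃ z ≤ x,
        v = d n z x - ((μ * x - B (n + 1) x) - (μ * z - B (n + 1) z))}
        (q (n + 1) x))
    (hd : ∀ (n : ℕ) (x y : ℝ),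
      d (n + 1) x y = d n x y - (q (n + 1) y - q (n + 1) x)) :
    ∀ (n : ℕ) (x : ℝ),
      q (n + 1) x = Lν x (n + 1) - Lν x n ∧
      d (n + 1) 0 x = μ * x - (Lν x (n + 1) - Lν 0 (n + 1)) := by
  have hqueue : ∀ n, (∀ t, d n 0 t = μ * t - (Lν t n - Lν 0 n)) →
      ∀ x, q (n + 1) x = Lν x (n + 1) - Lν x n := fun n hdn x =>
    queue_eq_of_departures_eq (hq n x) (isGreatest_lν_succ hEnv hLν0 hLν n x) fun z => by
      rw [departures_eq_sub hd0 hd, hdn, hdn]; ring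
  have hdep : ∀ n t, d n 0 t = μ * t - (Lν t n - Lν 0 n) := by
    intro n
    induction n with
    | zero => intro t; rw [hd0, hLν0, hLν0]; ring
    | succ n ih => intro t; rw [hd, ih, hqueue n ih, hqueue n ih]; ring
  exact fun n x => ⟨hqueue n (hdep n) x, hdep (n + 1) x⟩

/-- Queue lengths as vertical increments of LPP: with arrival `a x = μx - ν x`,
services `s⁽ⁿ⁾ x = μx - B n x`, and the tandem queue quantities defined
recursively by `q⁽ⁿ⁾ x = sup_{z ≤ x} { d⁽ⁿ⁻¹⁾(z,x) - s⁽ⁿ⁾(z,x) }` and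
`d⁽ⁿ⁾(x,y) = d⁽ⁿ⁻¹⁾(x,y) - (q⁽ⁿ⁾ y - q⁽ⁿ⁾ x)` with `d⁽⁰⁾ = a`, one has for every
`n ≥ 1`: `q⁽ⁿ⁾ x = Lν x n - Lν x (n-1)` and
`d⁽ⁿ⁾ x = μx - (Lν x n - Lν 0 n)`, where
`Lν x n = sup_{z ≤ x} { ν z + L((z,1),(x,n)) }` and `Lν x 0 = ν x`. -/
theorem tandemQueue_eq_lpp_increments (μ : ℝ) (ν : ℝ → ℝ) (hν : Continuous ν)
    (hν0 : ν 0 = 0) (B : ℕ → ℝ → ℝ) (hB : ∀ i, Continuous (B i))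
    (hB0 : ∀ i, B i 0 = 0)
    (Lenv : ℕ → ℕ → ℝ → ℝ → ℝ)
    (hEnv : ∀ (k l : ℕ) (z x : ℝ), 1 ≤ k → k ≤ l → z ≤ x →
      IsGreatest (lppSet B k l z x) (Lenv k l z x))
    (Lν : ℝ → ℕ → ℝ) (hLν0 : ∀ x : ℝ, Lν x 0 = ν x)
    (hLν : ∀ (x : ℝ) (n : ℕ), 1 ≤ n →
      IsGreatest {v | ∃ z ≤ x, v = ν z + Lenv 1 n z x} (Lν x n))
    (q : ℕ → ℝ → ℝ) (d : ℕ → ℝ → ℝ → ℝ)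
    (hd0 : ∀ x y : ℝ, d 0 x y = (μ * y - ν y) - (μ * x - ν x))
    (hq : ∀ (n : ℕ) (x : ℝ),
      IsGreatest {v | ∃ z ≤ x,
        v = d n z x - ((μ * x - B (n + 1) x) - (μ * z - B (n + 1) z))}
        (q (n + 1) x))
    (hd : ∀ (n : ℕ) (x y : ℝ),
      d (n + 1) x y = d n x y - (q (n + 1) y - q (n + 1) x)) :
    ∀ (n : ℕ) (x : ℝ),
      q (n + 1) x = Lν x (n + 1) - Lν x n ∧
      d (n + 1) 0 x = μ * x - (Lν x (n + 1) - Lν 0 (n + 1)) :=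
  tandemQueue_eq_lpp_increments_general μ ν B Lenv hEnv Lν hLν0 hLν q d hd0 hq hd
end

section
/- (TABEP–tandem queue identification.) Let $X^{(0)} : \mathbb{R} \to \mathbb{R}$ be continuous, $B^{(n)}$ continuous with $B^{(n)}(0)=0$, and define $X^{(n)}(x) = \sup_{y \le x}(X^{(n-1)}(y) + B^{(n)}(x) - B^{(n)}(y))$ (suprema finite). Define arrival $a(x) = \mu x - X^{(0)}(x) + X^{(0)}(0)$, services $s^{(n)}(x) = \mu x - B^{(n)}(x)$, and the tandem quantities $q^{(n)}, d^{(n)}$ as usual with $d^{(n)}(0)=0$. Then for every $n \ge 1$, $d^{(n)}(x) = X^{(0)}(0) + \sum_{i=1}^n q^{(i)}(0) + \mu x - X^{(n)}(x)$ for all $x \in \mathbb{R}$. -/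
/-!
The departure increments of the `n`-th queue are those of the `n`-th particle, centred and
drift-adjusted: `d⁽ⁿ⁾(z, x) = μ (x - z) - X⁽ⁿ⁾ x + X⁽ⁿ⁾ z`. Granting this for `n`, the supremum
defining `q⁽ⁿ⁺¹⁾ x` is the one defining `X⁽ⁿ⁺¹⁾ x` shifted by `-X⁽ⁿ⁾ x`, so
`q⁽ⁿ⁺¹⁾ = X⁽ⁿ⁺¹⁾ - X⁽ⁿ⁾`, and the recursion for `d⁽ⁿ⁺¹⁾` gives the formula for `n + 1`.
At `z = 0` the sum of the queue lengths `q⁽ⁱ⁾ 0` telescopes to `X⁽ⁿ⁾ 0 - X⁽⁰⁾ 0`.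
-/

open Finset

theorem Finset.sum_Icc_one_telescope {G : Type*} [AddCommGroup G] {f g : ℕ → G}
    (h : ∀ i, g (i + 1) = f (i + 1) - f i) (n : ℕ) :
    ∑ i ∈ Icc 1 n, g i = f n - f 0 := by
  induction n with
  | zero => simp
  | succ n ih => rw [sum_Icc_succ_top (by omega), ih, h]; abel

theorem tandem_queue_eq_sub {μ x Xx q : ℝ} {Xprev B D : ℝ → ℝ}
    (hX : IsLUB {v | ∃ y ≤ x, v = Xprev y + B x - B y} Xx)
    (hq : IsLUB {v | ∃ z ≤ x, v = D z - ((μ * x - B x) - (μ * z - B z))} q)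
    (hD : ∀ z, D z = μ * x - μ * z - Xprev x + Xprev z) :
    q = Xx - Xprev x := by
  have hshift : {v | ∃ z ≤ x, v = D z - ((μ * x - B x) - (μ * z - B z))} =
      OrderIso.addRight (-Xprev x) '' {v | ∃ y ≤ x, v = Xprev y + B x - B y} := by
    ext v
    simp only [Set.mem_ofPred_eq, Set.mem_image, OrderIso.addRight_apply]
    constructor
    · rintro ⟨z, hz, rfl⟩
      exact ⟨_, ⟨z, hz, rfl⟩, by rw [hD]; ring⟩
    · rintro ⟨_, ⟨z, hz, rfl⟩, rfl⟩
      exact ⟨z, hz, by rw [hD]; ring⟩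
  rw [hshift] at hq
  simpa [sub_eq_add_neg] using hq.unique ((OrderIso.addRight (-Xprev x)).isLUB_image'.2 hX)

theorem tandem_departure_eq {μ : ℝ} {X B q : ℕ → ℝ → ℝ} {d : ℕ → ℝ → ℝ → ℝ}
    (hX : ∀ (n : ℕ) (x : ℝ),
      IsLUB {v | ∃ y ≤ x, v = X n y + B (n + 1) x - B (n + 1) y} (X (n + 1) x))
    (hd0 : ∀ x y : ℝ,
      d 0 x y = (μ * y - X 0 y + X 0 0) - (μ * x - X 0 x + X 0 0))
    (hq : ∀ (n : ℕ) (x : ℝ),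
      IsLUB {v | ∃ z ≤ x,
        v = d n z x - ((μ * x - B (n + 1) x) - (μ * z - B (n + 1) z))}
        (q (n + 1) x))
    (hd : ∀ (n : ℕ) (x y : ℝ),
      d (n + 1) x y = d n x y - (q (n + 1) y - q (n + 1) x)) (n : ℕ) (z x : ℝ) :
    d n z x = μ * x - μ * z - X n x + X n z := by
  induction n generalizing z x with
  | zero => rw [hd0]; ring
  | succ n ih =>
    have hqn (x : ℝ) : q (n + 1) x = X (n + 1) x - X n x :=
      tandem_queue_eq_sub (hX n x) (hq n x) (ih · x)
    rw [hd, ih, hqn, hqn]; ring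

theorem tabep_tandemQueue_identification_general (μ : ℝ)
    (X B : ℕ → ℝ → ℝ)
    (hX : ∀ (n : ℕ) (x : ℝ),
      IsLUB {v | ∃ y ≤ x, v = X n y + B (n + 1) x - B (n + 1) y} (X (n + 1) x))
    (q : ℕ → ℝ → ℝ) (d : ℕ → ℝ → ℝ → ℝ)
    (hd0 : ∀ x y : ℝ,
      d 0 x y = (μ * y - X 0 y + X 0 0) - (μ * x - X 0 x + X 0 0))
    (hq : ∀ (n : ℕ) (x : ℝ),
      IsLUB {v | ∃ z ≤ x,
        v = d n z x - ((μ * x - B (n + 1) x) - (μ * z - B (n + 1) z))}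
        (q (n + 1) x))
    (hd : ∀ (n : ℕ) (x y : ℝ),
      d (n + 1) x y = d n x y - (q (n + 1) y - q (n + 1) x)) :
    ∀ (n : ℕ) (x : ℝ),
      d (n + 1) 0 x =
        X 0 0 + (∑ i ∈ Finset.Icc 1 (n + 1), q i 0) + μ * x - X (n + 1) x := by
  intro n x
  have hdep := tandem_departure_eq hX hd0 hq hd
  have hsum : ∑ i ∈ Icc 1 (n + 1), q i 0 = X (n + 1) 0 - X 0 0 :=
    sum_Icc_one_telescope (fun i ↦ tandem_queue_eq_sub (hX i 0) (hq i 0) (hdep i · 0)) _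
  rw [hdep, hsum]
  ring

/-- TABEP–tandem queue identification: with particles
`X⁽ⁿ⁾ x = sup_{y ≤ x} ( X⁽ⁿ⁻¹⁾ y + B n x - B n y )`, arrival
`a x = μx - X⁽⁰⁾ x + X⁽⁰⁾ 0`, services `s⁽ⁿ⁾ x = μx - B n x` and the usual tandem
recursions (`d⁽⁰⁾ = a`, `q⁽ⁿ⁾ x = sup_{z ≤ x} { d⁽ⁿ⁻¹⁾(z,x) - s⁽ⁿ⁾(z,x) }`,
`d⁽ⁿ⁾(x,y) = d⁽ⁿ⁻¹⁾(x,y) - (q⁽ⁿ⁾ y - q⁽ⁿ⁾ x)`), one has for every `n ≥ 1`: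
`d⁽ⁿ⁾ x = X⁽⁰⁾ 0 + ∑_{i=1}^n q⁽ⁱ⁾ 0 + μx - X⁽ⁿ⁾ x`. -/
theorem tabep_tandemQueue_identification (μ : ℝ)
    (X B : ℕ → ℝ → ℝ)
    (hX0 : Continuous (X 0)) (hB : ∀ n, Continuous (B n))
    (hB0 : ∀ n, B n 0 = 0)
    (hX : ∀ (n : ℕ) (x : ℝ),
      IsLUB {v | ∃ y ≤ x, v = X n y + B (n + 1) x - B (n + 1) y} (X (n + 1) x))
    (q : ℕ → ℝ → ℝ) (d : ℕ → ℝ → ℝ → ℝ)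
    (hd0 : ∀ x y : ℝ,
      d 0 x y = (μ * y - X 0 y + X 0 0) - (μ * x - X 0 x + X 0 0))
    (hq : ∀ (n : ℕ) (x : ℝ),
      IsLUB {v | ∃ z ≤ x,
        v = d n z x - ((μ * x - B (n + 1) x) - (μ * z - B (n + 1) z))}
        (q (n + 1) x))
    (hd : ∀ (n : ℕ) (x y : ℝ),
      d (n + 1) x y = d n x y - (q (n + 1) y - q (n + 1) x)) :
    ∀ (n : ℕ) (x : ℝ),
      d (n + 1) 0 x =
        X 0 0 + (∑ i ∈ Finset.Icc 1 (n + 1), q i 0) + μ * x - X (n + 1) x :=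
  tabep_tandemQueue_identification_general μ X B hX q d hd0 hq hd
end

section
/- Under the basic coupling with a common environment, if for some $x < y$ the exit points satisfy $Z_{\nu_1}(y,n) > Z_{\nu_2}(x,n)$, then $\big(L_{\nu_2}(y,n) - L_{\nu_2}(x,n)\big) - \big(L_{\nu_1}(y,n) - L_{\nu_1}(x,n)\big) \ge \big(\nu_2(z_1) - \nu_2(z_2)\big) - \big(\nu_1(z_1) - \nu_1(z_2)\big)$, where $z_1 = Z_{\nu_1}(y,n)$ and $z_2 = Z_{\nu_2}(x,n)$. -/
/-! Each exit point is admissible, though not necessarily optimal, for the other profile,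
so `ν₂ z₁ + L(z₁, y) ≤ L₂ y` and `ν₁ z₂ + L(z₂, x) ≤ L₁ x`, while `L₁ y = ν₁ z₁ + L(z₁, y)` and
`L₂ x = ν₂ z₂ + L(z₂, x)`; combining the four, the passage times cancel. -/

theorem exitValue_swap_le {ν₁ ν₂ L₁ L₂ : ℝ → ℝ} {W : ℝ → ℝ → ℝ} {x y z₁ z₂ : ℝ}
    (hL₁ : L₁ x ∈ upperBounds {v | ∃ z ≤ x, v = ν₁ z + W z x})
    (hL₂ : L₂ y ∈ upperBounds {v | ∃ z ≤ y, v = ν₂ z + W z y})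
    (hz₁ : z₁ ≤ y ∧ L₁ y = ν₁ z₁ + W z₁ y) (hz₂ : z₂ ≤ x ∧ L₂ x = ν₂ z₂ + W z₂ x) :
    (ν₂ z₁ - ν₂ z₂) - (ν₁ z₁ - ν₁ z₂) ≤ (L₂ y - L₂ x) - (L₁ y - L₁ x) := by
  have h₂y : ν₂ z₁ + W z₁ y ≤ L₂ y := hL₂ ⟨z₁, hz₁.1, rfl⟩
  have h₁x : ν₁ z₂ + W z₂ x ≤ L₁ x := hL₁ ⟨z₂, hz₂.1, rfl⟩
  linarith [hz₁.2, hz₂.2]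

theorem lpp_exitPoint_swap_general
    (ν₁ ν₂ : ℝ → ℝ)
    (Lenv : ℕ → ℕ → ℝ → ℝ → ℝ)
    (L₁ L₂ Z₁ Z₂ : ℝ → ℕ → ℝ)
    (hL₁ : ∀ (x : ℝ) (n : ℕ), 1 ≤ n →
      IsGreatest {v | ∃ z ≤ x, v = ν₁ z + Lenv 1 n z x} (L₁ x n))
    (hL₂ : ∀ (x : ℝ) (n : ℕ), 1 ≤ n →
      IsGreatest {v | ∃ z ≤ x, v = ν₂ z + Lenv 1 n z x} (L₂ x n))
    (hZ₁ : ∀ (x : ℝ) (n : ℕ), 1 ≤ n →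
      IsGreatest {z | z ≤ x ∧ L₁ x n = ν₁ z + Lenv 1 n z x} (Z₁ x n))
    (hZ₂ : ∀ (x : ℝ) (n : ℕ), 1 ≤ n →
      IsGreatest {z | z ≤ x ∧ L₂ x n = ν₂ z + Lenv 1 n z x} (Z₂ x n))
    (n : ℕ) (hn : 1 ≤ n) (x y : ℝ) :
    (ν₂ (Z₁ y n) - ν₂ (Z₂ x n)) - (ν₁ (Z₁ y n) - ν₁ (Z₂ x n)) ≤
      (L₂ y n - L₂ x n) - (L₁ y n - L₁ x n) :=
  exitValue_swap_le (L₁ := (L₁ · n)) (L₂ := (L₂ · n)) (W := Lenv 1 n)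
    (hL₁ x n hn).2 (hL₂ y n hn).2 (hZ₁ y n hn).1 (hZ₂ x n hn).1

/-- Exit point swap inequality: under the basic coupling with a common
environment, if for some `x < y` the exit points satisfy `Z₁ y n > Z₂ x n`, then
`(L₂ y n - L₂ x n) - (L₁ y n - L₁ x n) ≥ (ν₂ z₁ - ν₂ z₂) - (ν₁ z₁ - ν₁ z₂)`,
where `z₁ = Z₁ y n` and `z₂ = Z₂ x n`. -/
theorem lpp_exitPoint_swap (B : ℕ → ℝ → ℝ) (hB : ∀ i, Continuous (B i))
    (ν₁ ν₂ : ℝ → ℝ) (hν₁ : Continuous ν₁) (hν₂ : Continuous ν₂)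
    (Lenv : ℕ → ℕ → ℝ → ℝ → ℝ)
    (hEnv : ∀ (k l : ℕ) (z x : ℝ), 1 ≤ k → k ≤ l → z ≤ x →
      IsGreatest (lppSet B k l z x) (Lenv k l z x))
    (L₁ L₂ Z₁ Z₂ : ℝ → ℕ → ℝ)
    (hL₁ : ∀ (x : ℝ) (n : ℕ), 1 ≤ n →
      IsGreatest {v | ∃ z ≤ x, v = ν₁ z + Lenv 1 n z x} (L₁ x n))
    (hL₂ : ∀ (x : ℝ) (n : ℕ), 1 ≤ n →
      IsGreatest {v | ∃ z ≤ x, v = ν₂ z + Lenv 1 n z x} (L₂ x n))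
    (hZ₁ : ∀ (x : ℝ) (n : ℕ), 1 ≤ n →
      IsGreatest {z | z ≤ x ∧ L₁ x n = ν₁ z + Lenv 1 n z x} (Z₁ x n))
    (hZ₂ : ∀ (x : ℝ) (n : ℕ), 1 ≤ n →
      IsGreatest {z | z ≤ x ∧ L₂ x n = ν₂ z + Lenv 1 n z x} (Z₂ x n))
    (n : ℕ) (hn : 1 ≤ n) (x y : ℝ) (hxy : x < y)
    (hswap : Z₂ x n < Z₁ y n) :
    (ν₂ (Z₁ y n) - ν₂ (Z₂ x n)) - (ν₁ (Z₁ y n) - ν₁ (Z₂ x n)) ≤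
      (L₂ y n - L₂ x n) - (L₁ y n - L₁ x n) :=
  lpp_exitPoint_swap_general ν₁ ν₂ Lenv L₁ L₂ Z₁ Z₂ hL₁ hL₂ hZ₁ hZ₂ n hn x y
end

section
/- (Uniform sandwich bound.) Suppose $\nu, \nu_-, \nu_+$ are continuous profiles coupled through the same environment, and $C > 0, n \ge 1$ are such that (i) $Z_{\nu_-}(n+C,n) \le Z_\nu(n,n)$ and $Z_\nu(n+C,n) \le Z_{\nu_+}(n,n)$, and (ii) $\nu_-(y)-\nu_-(x) \le \nu_+(y)-\nu_+(x)$ for all $x<y$. Then $\sup_{x \in [0,C]} \big| M_\nu^{(n)}(n,n+x) - M^{(n)}(n, n+x)\big|$ — where $M^{(n)}$ is built from any profile $\nu_0$ with $\nu_-(y)-\nu_-(x) \le \nu_0(y)-\nu_0(x) \le \nu_+(y)-\nu_+(x)$ for all $x<y$ — is bounded above by $M_{\nu_+}^{(n)}(n,n+C) - M_{\nu_-}^{(n)}(n,n+C)$. -/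
/-- The crossing inequality of last-passage values, i.e. supermodularity of `(z, x) ↦ E z x`
on the lattice `{z ≤ x}` of ℝ × ℝ. -/
def SupermodularOnLE (E : ℝ → ℝ → ℝ) : Prop :=
  ∀ z₁ x₁ z₂ x₂ : ℝ, z₁ ≤ x₁ → z₂ ≤ x₂ →
    E z₁ x₁ + E z₂ x₂ ≤ E (min z₁ z₂) (min x₁ x₂) + E (max z₁ z₂) (max x₁ x₂)

lemma lppSet_crossing (B : ℕ → ℝ → ℝ) (k l : ℕ) {z₁ x₁ z₂ x₂ v₁ v₂ : ℝ}
    (h₁ : v₁ ∈ lppSet B k l z₁ x₁) (h₂ : v₂ ∈ lppSet B k l z₂ x₂) :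
    ∃ w₁ ∈ lppSet B k l (min z₁ z₂) (min x₁ x₂),
      ∃ w₂ ∈ lppSet B k l (max z₁ z₂) (max x₁ x₂), w₁ + w₂ = v₁ + v₂ := by
  obtain ⟨a, ha₀, hal, ha_mono, rfl⟩ := h₁
  obtain ⟨b, hb₀, hbl, hb_mono, rfl⟩ := h₂
  refine ⟨_, ⟨a ⊓ b, by simp only [Pi.inf_apply, ha₀, hb₀], by simp only [Pi.inf_apply, hal, hbl],
      fun i hk hl => inf_le_inf (ha_mono i hk hl) (hb_mono i hk hl), rfl⟩,
    _, ⟨a ⊔ b, by simp only [Pi.sup_apply, ha₀, hb₀], by simp only [Pi.sup_apply, hal, hbl],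
      fun i hk hl => sup_le_sup (ha_mono i hk hl) (hb_mono i hk hl), rfl⟩, ?_⟩
  rw [← Finset.sum_add_distrib, ← Finset.sum_add_distrib]
  refine Finset.sum_congr rfl fun i _ => ?_
  have min_add_max : ∀ c d : ℝ, B i (min c d) + B i (max c d) = B i c + B i d := by
    intro c d
    rcases le_total c d with h | h
    · rw [min_eq_left h, max_eq_right h]
    · rw [min_eq_right h, max_eq_left h, add_comm]
  simp only [Pi.inf_apply, Pi.sup_apply]
  linarith [min_add_max (a i) (b i), min_add_max (a (i - 1)) (b (i - 1))]

lemma supermodularOnLE_of_isGreatest_lppSet {B : ℕ → ℝ → ℝ} {k l : ℕ} {E : ℝ → ℝ → ℝ}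
    (hE : ∀ z x : ℝ, z ≤ x → IsGreatest (lppSet B k l z x) (E z x)) :
    SupermodularOnLE E := by
  intro z₁ x₁ z₂ x₂ h₁ h₂
  obtain ⟨w₁, hw₁, w₂, hw₂, hsum⟩ := lppSet_crossing B k l (hE _ _ h₁).1 (hE _ _ h₂).1
  have hw₁_le := (hE _ _ (min_le_min h₁ h₂)).2 hw₁
  have hw₂_le := (hE _ _ (max_le_max h₁ h₂)).2 hw₂
  linarith

lemma monotone_sub_of_increment_le {f g : ℝ → ℝ}
    (h : ∀ x y : ℝ, x < y → f y - f x ≤ g y - g x) : Monotone fun x => g x - f x := by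
  intro x y hxy
  rcases hxy.eq_or_lt with rfl | hlt
  · exact le_rfl
  · linarith [h x y hlt]

section Comparison

variable {E : ℝ → ℝ → ℝ} (hE : SupermodularOnLE E) {f g Lf Lg : ℝ → ℝ}
  (hLf : ∀ x, IsGreatest {v | ∃ z ≤ x, v = f z + E z x} (Lf x))
  (hLg : ∀ x, IsGreatest {v | ∃ z ≤ x, v = g z + E z x} (Lg x))
include hE hLf

lemma monotone_exitPoint {Z : ℝ → ℝ}
    (hZ : ∀ x, IsGreatest {z | z ≤ x ∧ Lf x = f z + E z x} (Z x)) : Monotone Z := by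
  intro x y hxy
  by_contra! hlt
  obtain ⟨hzx, hLx⟩ := (hZ x).1
  obtain ⟨hzy, hLy⟩ := (hZ y).1
  have hcross := hE (Z x) x (Z y) y hzx hzy
  rw [min_eq_right hlt.le, min_eq_left hxy, max_eq_left hlt.le, max_eq_right hxy] at hcross
  have h₁ : f (Z y) + E (Z y) x ≤ Lf x := (hLf x).2 ⟨Z y, hlt.le.trans hzx, rfl⟩
  have h₂ : f (Z x) + E (Z x) y ≤ Lf y := (hLf y).2 ⟨Z x, hzx.trans hxy, rfl⟩
  -- so `Z x` is also a maximizer at `y`, beyond the rightmost one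
  have hmax : Lf y = f (Z x) + E (Z x) y := by linarith
  exact hlt.not_ge ((hZ y).2 ⟨hzx.trans hxy, hmax⟩)

include hLg

lemma increment_le_of_maximizer_le {u v zf zg : ℝ} (huv : u ≤ v)
    (hLfv : Lf v = f zf + E zf v)
    (hzg : zg ≤ u) (hLgu : Lg u = g zg + E zg u) (hz : zf ≤ zg) :
    Lf v - Lf u ≤ Lg v - Lg u := by
  have hcross := hE zf v zg u (hz.trans hzg |>.trans huv) hzg
  rw [min_eq_left hz, min_eq_right huv, max_eq_right hz, max_eq_left huv] at hcross
  have h₁ : f zf + E zf u ≤ Lf u := (hLf u).2 ⟨zf, hz.trans hzg, rfl⟩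
  have h₂ : g zg + E zg v ≤ Lg v := (hLg v).2 ⟨zg, hzg.trans huv, rfl⟩
  linarith

lemma increment_le_of_monotone_sub (hfg : Monotone fun x => g x - f x) {u v : ℝ}
    (huv : u ≤ v) : Lf v - Lf u ≤ Lg v - Lg u := by
  obtain ⟨zf, hzf, hLfv⟩ := (hLf v).1
  obtain ⟨zg, hzg, hLgu⟩ := (hLg u).1
  rcases le_total zf zg with hz | hz
  · exact increment_le_of_maximizer_le hE hLf hLg huv hLfv hzg hLgu hz
  · have h₁ : g zf + E zf v ≤ Lg v := (hLg v).2 ⟨zf, hzf, rfl⟩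
    have h₂ : f zg + E zg u ≤ Lf u := (hLf u).2 ⟨zg, hzg, rfl⟩
    linarith [hfg hz]

end Comparison

theorem lpp_sandwich_bound_general (B : ℕ → ℝ → ℝ)
    (ν ν₀ νm νp : ℝ → ℝ)
    (Lenv : ℕ → ℕ → ℝ → ℝ → ℝ)
    (hEnv : ∀ (k l : ℕ) (z x : ℝ), 1 ≤ k → k ≤ l → z ≤ x →
      IsGreatest (lppSet B k l z x) (Lenv k l z x))
    (Lν L₀ Lm Lp Zν Zm Zp : ℝ → ℕ → ℝ)
    (hLν : ∀ (x : ℝ) (k : ℕ), 1 ≤ k →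
      IsGreatest {v | ∃ z ≤ x, v = ν z + Lenv 1 k z x} (Lν x k))
    (hL₀ : ∀ (x : ℝ) (k : ℕ), 1 ≤ k →
      IsGreatest {v | ∃ z ≤ x, v = ν₀ z + Lenv 1 k z x} (L₀ x k))
    (hLm : ∀ (x : ℝ) (k : ℕ), 1 ≤ k →
      IsGreatest {v | ∃ z ≤ x, v = νm z + Lenv 1 k z x} (Lm x k))
    (hLp : ∀ (x : ℝ) (k : ℕ), 1 ≤ k →
      IsGreatest {v | ∃ z ≤ x, v = νp z + Lenv 1 k z x} (Lp x k))
    (hZν : ∀ (x : ℝ) (k : ℕ), 1 ≤ k →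
      IsGreatest {z | z ≤ x ∧ Lν x k = ν z + Lenv 1 k z x} (Zν x k))
    (hZm : ∀ (x : ℝ) (k : ℕ), 1 ≤ k →
      IsGreatest {z | z ≤ x ∧ Lm x k = νm z + Lenv 1 k z x} (Zm x k))
    (hZp : ∀ (x : ℝ) (k : ℕ), 1 ≤ k →
      IsGreatest {z | z ≤ x ∧ Lp x k = νp z + Lenv 1 k z x} (Zp x k))
    (C : ℝ) (n : ℕ) (hn : 1 ≤ n)
    (hexit₁ : Zm ((n : ℝ) + C) n ≤ Zν (n : ℝ) n)
    (hexit₂ : Zν ((n : ℝ) + C) n ≤ Zp (n : ℝ) n)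
    (hmp : ∀ x y : ℝ, x < y → νm y - νm x ≤ νp y - νp x)
    (hm0 : ∀ x y : ℝ, x < y → νm y - νm x ≤ ν₀ y - ν₀ x)
    (h0p : ∀ x y : ℝ, x < y → ν₀ y - ν₀ x ≤ νp y - νp x) :
    ∀ x : ℝ, 0 ≤ x → x ≤ C →
      |(Lν ((n : ℝ) + x) n - Lν (n : ℝ) n) -
          (L₀ ((n : ℝ) + x) n - L₀ (n : ℝ) n)| ≤
        (Lp ((n : ℝ) + C) n - Lp (n : ℝ) n) -
          (Lm ((n : ℝ) + C) n - Lm (n : ℝ) n) := by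
  intro x hx₀ hxC
  have hE := supermodularOnLE_of_isGreatest_lppSet (hEnv 1 n · · le_rfl hn)
  have hxn : (n : ℝ) ≤ n + x := by linarith
  have hxC' : (n : ℝ) + x ≤ n + C := by linarith
  have hν_le_p := increment_le_of_maximizer_le hE (hLν · n hn) (hLp · n hn) hxn
    (hZν _ n hn).1.2 (hZp _ n hn).1.1 (hZp _ n hn).1.2
    ((monotone_exitPoint hE (hLν · n hn) (hZν · n hn) hxC').trans hexit₂)
  have hm_le_ν := increment_le_of_maximizer_le hE (hLm · n hn) (hLν · n hn) hxn
    (hZm _ n hn).1.2 (hZν _ n hn).1.1 (hZν _ n hn).1.2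
    ((monotone_exitPoint hE (hLm · n hn) (hZm · n hn) hxC').trans hexit₁)
  have hm_le_0 := increment_le_of_monotone_sub hE (hLm · n hn) (hL₀ · n hn)
    (monotone_sub_of_increment_le hm0) hxn
  have h0_le_p := increment_le_of_monotone_sub hE (hL₀ · n hn) (hLp · n hn)
    (monotone_sub_of_increment_le h0p) hxn
  have hm_le_p := increment_le_of_monotone_sub hE (hLm · n hn) (hLp · n hn)
    (monotone_sub_of_increment_le hmp) hxC'
  rw [abs_sub_le_iff]
  constructor <;> linarith

/-- Uniform sandwich bound: suppose the profiles `ν, ν₋, ν₀, ν₊` are coupled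
through the same environment, with exit point bounds
`Z₋ (n+C) n ≤ Zν n n` and `Zν (n+C) n ≤ Z₊ n n`, and with increments ordered:
`ν₋` increments `≤` `ν₀` increments `≤` `ν₊` increments (and `ν₋ ≤ ν₊`).
Then for all `x ∈ [0, C]`,
`|Mν (n, n+x) - M₀ (n, n+x)| ≤ M₊ (n, n+C) - M₋ (n, n+C)`, where
`M_λ (u, v) := L_λ v n - L_λ u n`. -/
theorem lpp_sandwich_bound (B : ℕ → ℝ → ℝ) (hB : ∀ i, Continuous (B i))
    (ν ν₀ νm νp : ℝ → ℝ) (hν : Continuous ν) (hν₀ : Continuous ν₀)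
    (hνm : Continuous νm) (hνp : Continuous νp)
    (Lenv : ℕ → ℕ → ℝ → ℝ → ℝ)
    (hEnv : ∀ (k l : ℕ) (z x : ℝ), 1 ≤ k → k ≤ l → z ≤ x →
      IsGreatest (lppSet B k l z x) (Lenv k l z x))
    (Lν L₀ Lm Lp Zν Zm Zp : ℝ → ℕ → ℝ)
    (hLν : ∀ (x : ℝ) (k : ℕ), 1 ≤ k →
      IsGreatest {v | ∃ z ≤ x, v = ν z + Lenv 1 k z x} (Lν x k))
    (hL₀ : ∀ (x : ℝ) (k : ℕ), 1 ≤ k →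
      IsGreatest {v | ∃ z ≤ x, v = ν₀ z + Lenv 1 k z x} (L₀ x k))
    (hLm : ∀ (x : ℝ) (k : ℕ), 1 ≤ k →
      IsGreatest {v | ∃ z ≤ x, v = νm z + Lenv 1 k z x} (Lm x k))
    (hLp : ∀ (x : ℝ) (k : ℕ), 1 ≤ k →
      IsGreatest {v | ∃ z ≤ x, v = νp z + Lenv 1 k z x} (Lp x k))
    (hZν : ∀ (x : ℝ) (k : ℕ), 1 ≤ k →
      IsGreatest {z | z ≤ x ∧ Lν x k = ν z + Lenv 1 k z x} (Zν x k))
    (hZm : ∀ (x : ℝ) (k : ℕ), 1 ≤ k →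
      IsGreatest {z | z ≤ x ∧ Lm x k = νm z + Lenv 1 k z x} (Zm x k))
    (hZp : ∀ (x : ℝ) (k : ℕ), 1 ≤ k →
      IsGreatest {z | z ≤ x ∧ Lp x k = νp z + Lenv 1 k z x} (Zp x k))
    (C : ℝ) (hC : 0 < C) (n : ℕ) (hn : 1 ≤ n)
    (hexit₁ : Zm ((n : ℝ) + C) n ≤ Zν (n : ℝ) n)
    (hexit₂ : Zν ((n : ℝ) + C) n ≤ Zp (n : ℝ) n)
    (hmp : ∀ x y : ℝ, x < y → νm y - νm x ≤ νp y - νp x)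
    (hm0 : ∀ x y : ℝ, x < y → νm y - νm x ≤ ν₀ y - ν₀ x)
    (h0p : ∀ x y : ℝ, x < y → ν₀ y - ν₀ x ≤ νp y - νp x) :
    ∀ x : ℝ, 0 ≤ x → x ≤ C →
      |(Lν ((n : ℝ) + x) n - Lν (n : ℝ) n) -
          (L₀ ((n : ℝ) + x) n - L₀ (n : ℝ) n)| ≤
        (Lp ((n : ℝ) + C) n - Lp (n : ℝ) n) -
          (Lm ((n : ℝ) + C) n - Lm (n : ℝ) n) :=
  lpp_sandwich_bound_general B ν ν₀ νm νp Lenv hEnv Lν L₀ Lm Lp Zν Zm Zp hLν hL₀ hLm hLp hZν hZm hZp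
    C n hn hexit₁ hexit₂ hmp hm0 h0p
end
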